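/- Let Ω₁ ⊂ ℍ_s^n be real-path-connected, let Ω₂ ⊂ ℍ_s^n be Ω₁-stem-preserving, and let f : Ω₂ → ℍ be path-slice. Define F^{f,s}_{Ω₁} := F^{f,c}_{Ω₁} * F^f_{Ω₁}, where F^{f,c}_{Ω₁} := (conj(F^{f,1}_{Ω₁}), conj(F^{f,2}_{Ω₁})) and * is the pointwise star-product on ℍ². Then for every γ ∈ 𝒫(ℂ^n, Ω₁): (a) F^{f,s}_{Ω₁}(γ) = ( conj(F^{f,1}_{Ω₁}(γ))·F^{f,1}_{Ω₁}(γ) − conj(F^{f,2}_{Ω₁}(γ))·F^{f,2}_{Ω₁}(γ), conj(F^{f,2}_{Ω₁}(γ))·F^{f,1}_{Ω₁}(γ) + conj( conj(F^{f,2}_{Ω₁}(γ))·F^{f,1}_{Ω₁}(γ) ) ), and both components are real numbers; (b) F^{f,s}_{Ω₁} is a path-slice stem function of the symmetrization f^s_{Ω₁}, i.e. f^s_{Ω₁}(γ^I(1)) = F^{f,s,1}_{Ω₁}(γ) + I·F^{f,s,2}_{Ω₁}(γ) for every I ∈ 𝕊(Ω₁, γ). -/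

import Mathlib

open scoped Quaternion
open Classical

attribute [local instance] Classical.propDecidable

noncomputable section

/-- Continuous-path carrier type: maps from `[0,1]` to `ℂⁿ`. -/
abbrev PathC (n : ℕ) := unitInterval → (Fin n → ℂ)

/-- The sphere of quaternionic imaginary units `𝕊 = {I : I² = -1}`. -/
def SQ : Set ℍ[ℝ] := {I | I ^ 2 = -1}

/-- A quaternion is real if it is the image of a real number. -/
def IsRealQ (p : ℍ[ℝ]) : Prop := ∃ r : ℝ, p = (r : ℍ[ℝ])

/-- `Ψ_i^I : ℂⁿ → ℂ_Iⁿ`, componentwise `x + y i ↦ x + y I`. -/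
def psi {n : ℕ} (I : ℍ[ℝ]) (z : Fin n → ℂ) : Fin n → ℍ[ℝ] :=
  fun k => ((z k).re : ℍ[ℝ]) + (z k).im • I

/-- The slice `ℂ_I = {x + y I}` as a subset of the quaternions. -/
def CI (I : ℍ[ℝ]) : Set ℍ[ℝ] := {p | ∃ x y : ℝ, p = (x : ℍ[ℝ]) + y • I}

/-- The weakly slice cone `ℍ_sⁿ = ⋃_{I ∈ 𝕊} ℂ_Iⁿ`. -/
def HSliceCone (n : ℕ) : Set (Fin n → ℍ[ℝ]) := ⋃ I ∈ SQ, Set.range (psi (n := n) I)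

/-- Membership in `𝒫(ℂⁿ)`: continuous with real initial point. -/
def IsPathP {n : ℕ} (γ : PathC n) : Prop :=
  Continuous γ ∧ ∀ k, ((γ 0) k).im = 0

/-- `γ^I ⊂ Ω`. -/
def pathInSlice {n : ℕ} (Ω : Set (Fin n → ℍ[ℝ])) (I : ℍ[ℝ]) (γ : PathC n) : Prop :=
  ∀ t, psi I (γ t) ∈ Ω

/-- `𝕊(Ω, γ) = {I ∈ 𝕊 : γ^I ⊂ Ω}`. -/
def SGamma {n : ℕ} (Ω : Set (Fin n → ℍ[ℝ])) (γ : PathC n) : Set ℍ[ℝ] :=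
  {I | I ∈ SQ ∧ pathInSlice Ω I γ}

/-- `γ ∈ 𝒫(ℂⁿ, Ω)`. -/
def PathIn {n : ℕ} (Ω : Set (Fin n → ℍ[ℝ])) (γ : PathC n) : Prop :=
  IsPathP γ ∧ ∃ I, I ∈ SGamma Ω γ

/-- `F` is a path-slice stem function of `f` on `Ω`. -/
def IsStem {n : ℕ} (Ω : Set (Fin n → ℍ[ℝ])) (f : (Fin n → ℍ[ℝ]) → ℍ[ℝ])
    (F : PathC n → ℍ[ℝ] × ℍ[ℝ]) : Prop :=
  ∀ γ, PathIn Ω γ → ∀ I ∈ SGamma Ω γ, f (psi I (γ 1)) = (F γ).1 + I * (F γ).2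

/-- `f` is a path-slice function on `Ω`. -/
def PathSlice {n : ℕ} (Ω : Set (Fin n → ℍ[ℝ])) (f : (Fin n → ℍ[ℝ]) → ℍ[ℝ]) : Prop :=
  ∃ F, IsStem Ω f F

/-- `Ω` is real-path-connected. -/
def RealPathConnected {n : ℕ} (Ω : Set (Fin n → ℍ[ℝ])) : Prop :=
  ∀ q ∈ Ω, ∃ γ : PathC n, PathIn Ω γ ∧ ∃ I ∈ SGamma Ω γ, psi I (γ 1) = q

/-- `Ω₂` is `Ω₁`-stem-preserving. -/
def StemPreserving {n : ℕ} (Ω₁ Ω₂ : Set (Fin n → ℍ[ℝ])) : Prop :=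
  (∀ γ : PathC n, PathIn Ω₁ γ → (SGamma Ω₂ γ).Nontrivial) ∧
  (∀ α β : PathC n, PathIn Ω₁ α → PathIn Ω₁ β → α 1 = β 1 →
    ¬ ∃ I, SGamma Ω₂ α ∩ SGamma Ω₂ β = {I})

/-- `Ω` is self-stem-preserving. -/
def SelfStemPreserving {n : ℕ} (Ω : Set (Fin n → ℍ[ℝ])) : Prop :=
  RealPathConnected Ω ∧ StemPreserving Ω Ω

/-- The map `𝕴 : ℍ_sⁿ → 𝕊 ∪ {0}`. -/
def frakI {n : ℕ} (q : Fin n → ℍ[ℝ]) : ℍ[ℝ] :=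
  if h : ∀ k, IsRealQ (q k) then 0
  else
    let k := (Finset.univ.filter fun k => ¬ IsRealQ (q k)).min' (by
      push_neg at h
      obtain ⟨k, hk⟩ := h
      exact ⟨k, Finset.mem_filter.mpr ⟨Finset.mem_univ k, hk⟩⟩)
    ‖q k - ((q k).re : ℍ[ℝ])‖⁻¹ • (q k - ((q k).re : ℍ[ℝ]))

/-- A choice of path-slice stem function of `f` (on paths in `Ω`); by
the results of Dou–Jin–Ren–Yang its restriction to `𝒫(ℂⁿ, Ω₁)` is the canonical `F^f_{Ω₁}`. -/
def stemOf {n : ℕ} (Ω : Set (Fin n → ℍ[ℝ])) (f : (Fin n → ℍ[ℝ]) → ℍ[ℝ]) :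
    PathC n → ℍ[ℝ] × ℍ[ℝ] :=
  Classical.epsilon (IsStem Ω f)

/-- The function `ℱ^f_{Ω₁} : Ω₁ → ℍ²` induced by the stem of `f` (path-slice on `Ω₂`). -/
def scrF {n : ℕ} (Ω₁ Ω₂ : Set (Fin n → ℍ[ℝ])) (f : (Fin n → ℍ[ℝ]) → ℍ[ℝ])
    (q : Fin n → ℍ[ℝ]) : ℍ[ℝ] × ℍ[ℝ] :=
  if ∀ k, IsRealQ (q k) then (f q, 0)
  else stemOf Ω₂ f (Classical.epsilon (fun γ : PathC n =>
    PathIn Ω₁ γ ∧ pathInSlice Ω₁ (frakI q) γ ∧ psi (frakI q) (γ 1) = q))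

/-- The `Ω₁`-slice conjugation `f^c_{Ω₁}`. -/
def sliceConj {n : ℕ} (Ω₁ Ω₂ : Set (Fin n → ℍ[ℝ])) (f : (Fin n → ℍ[ℝ]) → ℍ[ℝ]) :
    (Fin n → ℍ[ℝ]) → ℍ[ℝ] :=
  fun q => star (scrF Ω₁ Ω₂ f q).1 + frakI q * star (scrF Ω₁ Ω₂ f q).2

/-- The `*`-product `g * f` of a path-slice `g : Ω₁ → ℍ` with `f : Ω₂ → ℍ`. -/
def starProdF {n : ℕ} (Ω₁ Ω₂ : Set (Fin n → ℍ[ℝ])) (g f : (Fin n → ℍ[ℝ]) → ℍ[ℝ]) :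
    (Fin n → ℍ[ℝ]) → ℍ[ℝ] :=
  fun q => g q * (scrF Ω₁ Ω₂ f q).1 + frakI q * g q * (scrF Ω₁ Ω₂ f q).2

/-- The symmetrization `f^s_{Ω₁} = f^c_{Ω₁} * f`. -/
def symmF {n : ℕ} (Ω₁ Ω₂ : Set (Fin n → ℍ[ℝ])) (f : (Fin n → ℍ[ℝ]) → ℍ[ℝ]) :
    (Fin n → ℍ[ℝ]) → ℍ[ℝ] :=
  starProdF Ω₁ Ω₂ (sliceConj Ω₁ Ω₂ f) f

/-- The pointwise `*`-product on `ℍ²`. -/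
def starPair (p q : ℍ[ℝ] × ℍ[ℝ]) : ℍ[ℝ] × ℍ[ℝ] :=
  (p.1 * q.1 - p.2 * q.2, p.2 * q.1 + p.1 * q.2)

/-- Slice-open sets: every slice is open (pulled back to `ℂⁿ` via `Ψ_i^I`). -/
def SliceOpen {n : ℕ} (U : Set (Fin n → ℍ[ℝ])) : Prop :=
  ∀ I ∈ SQ, IsOpen {z : Fin n → ℂ | psi I z ∈ U}

/-- Weakly slice regular functions: each slice restriction is left `I`-holomorphic. -/
def SliceRegular {n : ℕ} (Ω : Set (Fin n → ℍ[ℝ])) (f : (Fin n → ℍ[ℝ]) → ℍ[ℝ]) : Prop :=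
  ∀ I ∈ SQ, ∀ z : Fin n → ℂ, psi I z ∈ Ω →
    DifferentiableWithinAt ℝ (fun w => f (psi I w)) {w | psi I w ∈ Ω} z ∧
    ∀ ℓ : Fin n,
      fderivWithin ℝ (fun w => f (psi I w)) {w | psi I w ∈ Ω} z (Pi.single ℓ 1)
        + I * fderivWithin ℝ (fun w => f (psi I w)) {w | psi I w ∈ Ω} z (Pi.single ℓ Complex.I)
        = 0

/-- The ball `B_I(q, r)` inside the slice `ℂ_Iⁿ`. -/
def BI {n : ℕ} (I : ℍ[ℝ]) (q : Fin n → ℍ[ℝ]) (r : ℝ) : Set (Fin n → ℍ[ℝ]) :=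
  {p | p ∈ Set.range (psi (n := n) I) ∧ dist p q < r}

/-- The slice topology. -/
def sliceTop (n : ℕ) : TopologicalSpace (Fin n → ℍ[ℝ]) where
  IsOpen := SliceOpen
  isOpen_univ := by intro I _; simpa using isOpen_univ
  isOpen_inter := by
    intro s t hs ht I hI
    have h : {z : Fin n → ℂ | psi I z ∈ s ∩ t}
        = {z : Fin n → ℂ | psi I z ∈ s} ∩ {z : Fin n → ℂ | psi I z ∈ t} := by
      ext z; simp [Set.mem_inter_iff]
    rw [h]
    exact (hs I hI).inter (ht I hI)
  isOpen_sUnion := by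
    intro S hS I hI
    have h : {z : Fin n → ℂ | psi I z ∈ ⋃₀ S} = ⋃ s ∈ S, {z : Fin n → ℂ | psi I z ∈ s} := by
      ext z; simp
    rw [h]
    exact isOpen_biUnion fun s hs => hS s hs I hI

/-- Slice-domains: nonempty slice-open sets connected in the slice topology. -/
def SliceDomain {n : ℕ} (Ω : Set (Fin n → ℍ[ℝ])) : Prop :=
  SliceOpen Ω ∧ @IsConnected _ (sliceTop n) Ω

/-- Concatenation `γ · ℒ_{γ(1)}^z` of a path with the segment from `γ(1)` to `z`. -/
def concatSeg {n : ℕ} (γ : PathC n) (z : Fin n → ℂ) : PathC n := fun t =>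
  if h : (t : ℝ) ≤ 1 / 2 then
    γ ⟨2 * (t : ℝ), ⟨by linarith [t.2.1], by linarith⟩⟩
  else
    (1 - (2 * (t : ℝ) - 1)) • γ 1 + (2 * (t : ℝ) - 1) • z

/-- The action of `σ` on `ℍ²`: `σ(p₁, p₂) = (-p₂, p₁)`. -/
def sigmaAct (p : ℍ[ℝ] × ℍ[ℝ]) : ℍ[ℝ] × ℍ[ℝ] := (-p.2, p.1)

/-- `F : 𝒫(ℂⁿ, Ω) → ℍ²` is holomorphic at the path `γ`. -/
def StemHoloAt {n : ℕ} (Ω : Set (Fin n → ℍ[ℝ])) (F : PathC n → ℍ[ℝ] × ℍ[ℝ])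
    (γ : PathC n) : Prop :=
  ∃ r > 0, (∀ z ∈ Metric.ball (γ 1) r, PathIn Ω (concatSeg γ z)) ∧
    ∀ z ∈ Metric.ball (γ 1) r,
      DifferentiableAt ℝ (fun w => F (concatSeg γ w)) z ∧
      ∀ ℓ : Fin n,
        fderiv ℝ (fun w => F (concatSeg γ w)) z (Pi.single ℓ 1)
          + sigmaAct (fderiv ℝ (fun w => F (concatSeg γ w)) z (Pi.single ℓ Complex.I)) = 0

/-- `F` is holomorphic (at every path of `𝒫(ℂⁿ, Ω)`). -/
def StemHolo {n : ℕ} (Ω : Set (Fin n → ℍ[ℝ])) (F : PathC n → ℍ[ℝ] × ℍ[ℝ]) : Prop :=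
  ∀ γ, PathIn Ω γ → StemHoloAt Ω F γ

/-- `E` is a complex-analytic subset of the open set `U ⊂ ℂⁿ`. -/
def IsComplexAnalyticSubset {n : ℕ} (U E : Set (Fin n → ℂ)) : Prop :=
  E ⊆ U ∧ ∀ z ∈ U, ∃ V, V ⊆ U ∧ IsOpen V ∧ z ∈ V ∧
    ∃ (m : ℕ) (h : Fin m → (Fin n → ℂ) → ℂ),
      (∀ j, DifferentiableOn ℂ (h j) V) ∧ E ∩ V = {w | w ∈ V ∧ ∀ j, h j w = 0}

/-- `A` is a path-slice analytic subset of the slice-domain `Ω`. -/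
def PathSliceAnalytic {n : ℕ} (Ω A : Set (Fin n → ℍ[ℝ])) : Prop :=
  A = Ω ∨ ∀ γ : PathC n, PathIn Ω γ →
    ∃ r > 0, ∃ rI : ℍ[ℝ] → ℝ, (∀ I ∈ SGamma Ω γ, rI I ∈ Set.Ioc (0 : ℝ) r) ∧
      ∃ E : Set (Fin n → ℂ), IsComplexAnalyticSubset (Metric.ball (γ 1) r) E ∧
        E ≠ Metric.ball (γ 1) r ∧
        ∀ I ∈ SGamma Ω γ, A ∩ BI I (psi I (γ 1)) (rI I) ⊆ psi I '' E

/-! For distinct imaginary units `K₁ ≠ K₂`, the two equations `a + K b = c + K d`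
(`K = K₁, K₂`) force `(a, b) = (c, d)`. Stem preservation provides two such units along every
path of `𝒫(ℂⁿ, Ω₁)`, in particular along `α` followed by the reverse of `β`; so the stem of `f`
takes equal values on paths with a common slice and endpoint, and at the conjugate path `γ̄` it
is `(F₁(γ), -F₂(γ))`. For non-real `q = γ^I(1)` one has `𝕴(q) = ±I`, hence `ℱ^f(q)` is the
stem at `γ` or at `γ̄`, and expanding `f^c * f` with `𝕴(q)² = -1` gives the symmetrized stem.
Its components are real since `conj(a) a = |a|²` and `x + conj(x) = 2 Re x`. -/

theorem Prod.eq_of_add_mul_eq_of_ne {R : Type*} [Ring R] [NoZeroDivisors R] {K₁ K₂ : R}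
    (hK : K₁ ≠ K₂) {p q : R × R} (h₁ : p.1 + K₁ * p.2 = q.1 + K₁ * q.2)
    (h₂ : p.1 + K₂ * p.2 = q.1 + K₂ * q.2) : p = q := by
  have h : (K₁ - K₂) * (p.2 - q.2) = 0 := by
    linear_combination (norm := noncomm_ring) h₁ - h₂
  have h₂' : p.2 = q.2 :=
    sub_eq_zero.1 ((mul_eq_zero.1 h).resolve_left (sub_ne_zero.2 hK))
  exact Prod.ext (by rw [h₂'] at h₁; exact add_right_cancel h₁) h₂'

section ImaginaryUnits

variable {I : ℍ[ℝ]}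

theorem mul_self_eq_neg_one_of_mem_SQ (hI : I ∈ SQ) : I * I = -1 := by
  rw [← sq]; exact hI

theorem neg_mem_SQ (hI : I ∈ SQ) : -I ∈ SQ := by
  rw [SQ, Set.mem_ofPred_eq, neg_sq]; exact hI

theorem ne_zero_of_mem_SQ (hI : I ∈ SQ) : I ≠ 0 := by
  rintro rfl
  simpa using mul_self_eq_neg_one_of_mem_SQ hI

theorem norm_eq_one_of_mem_SQ (hI : I ∈ SQ) : ‖I‖ = 1 := by
  have h : ‖I‖ * ‖I‖ = 1 := by
    rw [← norm_mul, mul_self_eq_neg_one_of_mem_SQ hI, norm_neg, norm_one]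
  nlinarith [norm_nonneg I]

theorem re_eq_zero_of_mem_SQ (hI : I ∈ SQ) : I.re = 0 := by
  have hn : Quaternion.normSq I = 1 := by
    rw [Quaternion.normSq_eq_norm_mul_self, norm_eq_one_of_mem_SQ hI, mul_one]
  exact Quaternion.sq_eq_neg_normSq.1 (by rw [hI, hn, Quaternion.coe_one])

theorem coe_add_smul_inj_of_mem_SQ (hI : I ∈ SQ) {x y x' y' : ℝ} :
    (x : ℍ[ℝ]) + y • I = x' + y' • I ↔ x = x' ∧ y = y' := by
  refine ⟨fun h => ?_, fun h => by rw [h.1, h.2]⟩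
  have hx : x = x' := by
    simpa [re_eq_zero_of_mem_SQ hI] using congrArg QuaternionAlgebra.re h
  subst hx
  exact ⟨rfl, smul_left_injective ℝ (ne_zero_of_mem_SQ hI) (add_left_cancel h)⟩

end ImaginaryUnits

section SliceMap

variable {n : ℕ} {I : ℍ[ℝ]}

theorem re_psi_apply (hI : I ∈ SQ) (z : Fin n → ℂ) (k : Fin n) :
    (psi I z k).re = (z k).re := by
  simp [psi, re_eq_zero_of_mem_SQ hI]

theorem psi_apply_sub_re (hI : I ∈ SQ) (z : Fin n → ℂ) (k : Fin n) :
    psi I z k - ((psi I z k).re : ℍ[ℝ]) = (z k).im • I := by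
  rw [re_psi_apply hI, psi, add_sub_cancel_left]

theorem psi_injective (hI : I ∈ SQ) : Function.Injective (psi (n := n) I) := fun _ _ h =>
  funext fun k =>
    have hk := (coe_add_smul_inj_of_mem_SQ hI).1 (congrFun h k)
    Complex.ext hk.1 hk.2

theorem isRealQ_psi_apply_iff (hI : I ∈ SQ) (z : Fin n → ℂ) (k : Fin n) :
    IsRealQ (psi I z k) ↔ (z k).im = 0 := by
  refine ⟨fun ⟨r, hr⟩ => ?_, fun h => ⟨(z k).re, by simp [psi, h]⟩⟩
  have hr' : ((z k).re : ℍ[ℝ]) + (z k).im • I = r + (0 : ℝ) • I := by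
    rw [zero_smul, add_zero]; exact hr
  exact ((coe_add_smul_inj_of_mem_SQ hI).1 hr').2

theorem psi_eq_of_im_eq_zero {z : Fin n → ℂ} (hz : ∀ k, (z k).im = 0) (J K : ℍ[ℝ]) :
    psi J z = psi K z := by
  funext k; simp [psi, hz k]

theorem psi_neg_star (I : ℍ[ℝ]) (z : Fin n → ℂ) : psi (-I) (star z) = psi I z := by
  funext k; simp [psi]

theorem frakI_psi_eq_or (hI : I ∈ SQ) {z : Fin n → ℂ} (hz : ¬ ∀ k, (z k).im = 0) :
    frakI (psi I z) = I ∨ frakI (psi I z) = -I := by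
  have hq : ¬ ∀ k, IsRealQ (psi I z k) := by
    simpa only [isRealQ_psi_apply_iff hI] using hz
  rw [frakI, dif_neg hq]
  dsimp only
  generalize_proofs hne
  have hk := (Finset.mem_filter.1 (Finset.min'_mem _ hne)).2
  generalize Finset.min' _ hne = k at hk ⊢
  have hy : (z k).im ≠ 0 := mt (isRealQ_psi_apply_iff hI z k).2 hk
  rw [psi_apply_sub_re hI, norm_smul, norm_eq_one_of_mem_SQ hI, mul_one, smul_smul,
    Real.norm_eq_abs]
  rcases hy.lt_or_gt with hneg | hpos
  · right
    rw [abs_of_neg hneg, inv_neg, neg_mul, inv_mul_cancel₀ hy, neg_one_smul]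
  · left
    rw [abs_of_pos hpos, inv_mul_cancel₀ hy, one_smul]

end SliceMap

section Paths

variable {n : ℕ} {Ω : Set (Fin n → ℍ[ℝ])} {K : ℍ[ℝ]} {γ : PathC n}

theorem pathInSlice_iff_range_subset : pathInSlice Ω K γ ↔ Set.range γ ⊆ psi K ⁻¹' Ω := by
  rw [Set.range_subset_iff]; rfl

theorem SGamma_subset_of_range_subset {γ μ : PathC n} (h : Set.range γ ⊆ Set.range μ) :
    SGamma Ω μ ⊆ SGamma Ω γ := fun _ hK =>
  ⟨hK.1, pathInSlice_iff_range_subset.2 (h.trans (pathInSlice_iff_range_subset.1 hK.2))⟩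

theorem IsPathP.star (hγ : IsPathP γ) : IsPathP (star γ) :=
  ⟨continuous_star.comp hγ.1, fun k => by simp [hγ.2 k]⟩

theorem neg_mem_SGamma_star (hK : K ∈ SGamma Ω γ) : -K ∈ SGamma Ω (star γ) :=
  ⟨neg_mem_SQ hK.1, fun t => by rw [Pi.star_apply, psi_neg_star]; exact hK.2 t⟩

theorem exists_isPathP_range_eq_union {α β : PathC n} (hα : IsPathP α) (hβ : Continuous β)
    (hend : α 1 = β 1) :
    ∃ μ : PathC n, IsPathP μ ∧ Set.range μ = Set.range α ∪ Set.range β := by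
  let pα : Path (α 0) (α 1) := ⟨⟨α, hα.1⟩, rfl, rfl⟩
  let pβ : Path (β 0) (β 1) := ⟨⟨β, hβ⟩, rfl, rfl⟩
  refine ⟨pα.trans (pβ.symm.cast hend rfl), ⟨Path.continuous _, fun k => ?_⟩, ?_⟩
  · rw [Path.source]; exact hα.2 k
  · rw [Path.trans_range, Path.cast_coe, Path.symm_range]; rfl

end Paths

section Stems

variable {n : ℕ} {Ω Ω₁ Ω₂ : Set (Fin n → ℍ[ℝ])} {f : (Fin n → ℍ[ℝ]) → ℍ[ℝ]}
  {F : PathC n → ℍ[ℝ] × ℍ[ℝ]} {γ : PathC n}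

theorem isStem_stemOf (hf : PathSlice Ω f) : IsStem Ω f (stemOf Ω f) :=
  Classical.epsilon_spec hf

theorem IsStem.apply_eq_of_ne (hF : IsStem Ω f F) (hγ : IsPathP γ) {K₁ K₂ : ℍ[ℝ]}
    (hne : K₁ ≠ K₂) (hK₁ : K₁ ∈ SGamma Ω γ) (hK₂ : K₂ ∈ SGamma Ω γ) {p : ℍ[ℝ] × ℍ[ℝ]}
    (h₁ : f (psi K₁ (γ 1)) = p.1 + K₁ * p.2) (h₂ : f (psi K₂ (γ 1)) = p.1 + K₂ * p.2) :
    F γ = p :=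
  Prod.eq_of_add_mul_eq_of_ne hne ((hF γ ⟨hγ, K₁, hK₁⟩ K₁ hK₁).symm.trans h₁)
    ((hF γ ⟨hγ, K₁, hK₁⟩ K₂ hK₂).symm.trans h₂)

theorem IsStem.apply_of_im_eq_zero (hF : IsStem Ω f F) (hγ : IsPathP γ)
    (hS : (SGamma Ω γ).Nontrivial) (hreal : ∀ k, (γ 1 k).im = 0) (K : ℍ[ℝ]) :
    F γ = (f (psi K (γ 1)), 0) := by
  obtain ⟨K₁, hK₁, K₂, hK₂, hne⟩ := hS
  refine hF.apply_eq_of_ne hγ hne hK₁ hK₂ ?_ ?_ <;>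
    simp only [mul_zero, add_zero, psi_eq_of_im_eq_zero hreal _ K]

theorem IsStem.apply_star (hF : IsStem Ω f F) (hγ : IsPathP γ)
    (hS : (SGamma Ω γ).Nontrivial) :
    F (star γ) = ((F γ).1, -(F γ).2) := by
  obtain ⟨K₁, hK₁, K₂, hK₂, hne⟩ := hS
  have hstar : ∀ K ∈ SGamma Ω γ,
      f (psi (-K) ((star γ) 1)) = (F γ).1 + -K * -(F γ).2 := fun K hK => by
    rw [Pi.star_apply, psi_neg_star, neg_mul_neg, hF γ ⟨hγ, K, hK⟩ K hK]
  exact hF.apply_eq_of_ne hγ.star (neg_injective.ne hne) (neg_mem_SGamma_star hK₁)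
    (neg_mem_SGamma_star hK₂) (hstar K₁ hK₁) (hstar K₂ hK₂)

theorem IsStem.apply_eq_of_mem_SGamma (hsp : StemPreserving Ω₁ Ω₂) (hF : IsStem Ω₂ f F)
    {α β : PathC n} (hα : PathIn Ω₁ α) (hβ : PathIn Ω₁ β) {K : ℍ[ℝ]}
    (hKα : K ∈ SGamma Ω₁ α) (hKβ : K ∈ SGamma Ω₁ β) (hend : α 1 = β 1) : F α = F β := by
  obtain ⟨μ, hμ, hrange⟩ := exists_isPathP_range_eq_union hα.1 hβ.1.1 hend
  have hμα : SGamma Ω₂ μ ⊆ SGamma Ω₂ α :=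
    SGamma_subset_of_range_subset (hrange ▸ Set.subset_union_left)
  have hμβ : SGamma Ω₂ μ ⊆ SGamma Ω₂ β :=
    SGamma_subset_of_range_subset (hrange ▸ Set.subset_union_right)
  have hKμ : pathInSlice Ω₁ K μ := by
    rw [pathInSlice_iff_range_subset, hrange, Set.union_subset_iff]
    exact ⟨pathInSlice_iff_range_subset.1 hKα.2, pathInSlice_iff_range_subset.1 hKβ.2⟩
  obtain ⟨K₁, hK₁, K₂, hK₂, hne⟩ := hsp.1 μ ⟨hμ, K, hKα.1, hKμ⟩
  have hβ_val : ∀ K' ∈ SGamma Ω₂ μ, f (psi K' (α 1)) = (F β).1 + K' * (F β).2 :=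
    fun K' hK' => by rw [hend]; exact hF β ⟨hβ.1, K', hμβ hK'⟩ K' (hμβ hK')
  exact hF.apply_eq_of_ne hα.1 hne (hμα hK₁) (hμα hK₂) (hβ_val K₁ hK₁) (hβ_val K₂ hK₂)

end Stems

section Symmetrization

variable {n : ℕ} {Ω₁ Ω₂ : Set (Fin n → ℍ[ℝ])} {f : (Fin n → ℍ[ℝ]) → ℍ[ℝ]}

theorem scrF_psi_eq_stemOf (hsp : StemPreserving Ω₁ Ω₂) (hf : PathSlice Ω₂ f) {γ : PathC n}
    (hγ : PathIn Ω₁ γ) {J : ℍ[ℝ]} (hJ : J ∈ SGamma Ω₁ γ)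
    (hq : ¬ ∀ k, IsRealQ (psi J (γ 1) k)) (hfrak : frakI (psi J (γ 1)) = J) :
    scrF Ω₁ Ω₂ f (psi J (γ 1)) = stemOf Ω₂ f γ := by
  rw [scrF, if_neg hq]
  have hδ := Classical.epsilon_spec (p := fun δ : PathC n =>
      PathIn Ω₁ δ ∧ pathInSlice Ω₁ (frakI (psi J (γ 1))) δ ∧
        psi (frakI (psi J (γ 1))) (δ 1) = psi J (γ 1))
    ⟨γ, hγ, by rw [hfrak]; exact hJ.2, by rw [hfrak]⟩
  generalize Classical.epsilon (α := PathC n) _ = δ at hδ ⊢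
  rw [hfrak] at hδ
  obtain ⟨hδ, hδJ, hδend⟩ := hδ
  exact (isStem_stemOf hf).apply_eq_of_mem_SGamma hsp hδ hγ ⟨hJ.1, hδJ⟩ hJ
    (psi_injective hJ.1 hδend)

theorem symmF_of_isRealQ {q : Fin n → ℍ[ℝ]} (hq : ∀ k, IsRealQ (q k)) :
    symmF Ω₁ Ω₂ f q = star (f q) * f q := by
  simp [symmF, starProdF, sliceConj, scrF, frakI, hq]

theorem symmF_apply {q : Fin n → ℍ[ℝ]} (hJ : frakI q * frakI q = -1) :
    symmF Ω₁ Ω₂ f q =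
      (star (scrF Ω₁ Ω₂ f q).1 * (scrF Ω₁ Ω₂ f q).1
          - star (scrF Ω₁ Ω₂ f q).2 * (scrF Ω₁ Ω₂ f q).2)
        + frakI q * (star (scrF Ω₁ Ω₂ f q).2 * (scrF Ω₁ Ω₂ f q).1
          + star (scrF Ω₁ Ω₂ f q).1 * (scrF Ω₁ Ω₂ f q).2) := by
  simp only [symmF, starProdF, sliceConj]
  linear_combination (norm := noncomm_ring)
    hJ * (star (scrF Ω₁ Ω₂ f q).2 * (scrF Ω₁ Ω₂ f q).2)

theorem isStem_symmF (hsp : StemPreserving Ω₁ Ω₂) (hf : PathSlice Ω₂ f) :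
    IsStem Ω₁ (symmF Ω₁ Ω₂ f) fun γ =>
      starPair (star (stemOf Ω₂ f γ).1, star (stemOf Ω₂ f γ).2) (stemOf Ω₂ f γ) := by
  have hF := isStem_stemOf hf
  intro γ hγ I hI
  have hS := hsp.1 γ hγ
  simp only [starPair]
  by_cases hreal : ∀ k, (γ 1 k).im = 0
  · have hq : ∀ k, IsRealQ (psi I (γ 1) k) := fun k =>
      (isRealQ_psi_apply_iff hI.1 _ k).2 (hreal k)
    rw [symmF_of_isRealQ hq, hF.apply_of_im_eq_zero hγ.1 hS hreal I]
    simp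
  have hq : ¬ ∀ k, IsRealQ (psi I (γ 1) k) := by
    simpa only [isRealQ_psi_apply_iff hI.1] using hreal
  rcases frakI_psi_eq_or hI.1 hreal with hfrak | hfrak
  · rw [symmF_apply (by rw [hfrak]; exact mul_self_eq_neg_one_of_mem_SQ hI.1),
      scrF_psi_eq_stemOf hsp hf hγ hI hq hfrak, hfrak]
  · have hγ' : PathIn Ω₁ (star γ) := ⟨hγ.1.star, -I, neg_mem_SGamma_star hI⟩
    have hq' : psi I (γ 1) = psi (-I) ((star γ) 1) := (psi_neg_star I (γ 1)).symm
    rw [hq'] at hq hfrak ⊢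
    rw [symmF_apply (by rw [hfrak]; exact mul_self_eq_neg_one_of_mem_SQ (neg_mem_SQ hI.1)),
      scrF_psi_eq_stemOf hsp hf hγ' (neg_mem_SGamma_star hI) hq hfrak, hfrak,
      hF.apply_star hγ.1 hS]
    simp only [star_neg, neg_mul, mul_neg, neg_neg]
    noncomm_ring

end Symmetrization

section StarPair

theorem starPair_star_self (p : ℍ[ℝ] × ℍ[ℝ]) :
    starPair (star p.1, star p.2) p =
      (star p.1 * p.1 - star p.2 * p.2, star p.2 * p.1 + star (star p.2 * p.1)) := by
  rw [starPair, star_mul, star_star]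

theorem isRealQ_starPair_star_self_fst (p : ℍ[ℝ] × ℍ[ℝ]) :
    IsRealQ (starPair (star p.1, star p.2) p).1 :=
  ⟨Quaternion.normSq p.1 - Quaternion.normSq p.2, by
    simp only [starPair, Quaternion.star_mul_self]; push_cast; rfl⟩

theorem isRealQ_starPair_star_self_snd (p : ℍ[ℝ] × ℍ[ℝ]) :
    IsRealQ (starPair (star p.1, star p.2) p).2 :=
  ⟨2 * (star p.2 * p.1).re, by rw [starPair_star_self, Quaternion.self_add_star']⟩

end StarPair

theorem symm_stem_general {n : ℕ} (Ω₁ Ω₂ : Set (Fin n → ℍ[ℝ]))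
    (hsp : StemPreserving Ω₁ Ω₂)
    (f : (Fin n → ℍ[ℝ]) → ℍ[ℝ]) (hf : PathSlice Ω₂ f) :
    (∀ γ : PathC n, PathIn Ω₁ γ →
      starPair (star (stemOf Ω₂ f γ).1, star (stemOf Ω₂ f γ).2) (stemOf Ω₂ f γ)
        = (star (stemOf Ω₂ f γ).1 * (stemOf Ω₂ f γ).1
            - star (stemOf Ω₂ f γ).2 * (stemOf Ω₂ f γ).2,
          star (stemOf Ω₂ f γ).2 * (stemOf Ω₂ f γ).1
            + star (star (stemOf Ω₂ f γ).2 * (stemOf Ω₂ f γ).1)) ∧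
      IsRealQ (starPair (star (stemOf Ω₂ f γ).1, star (stemOf Ω₂ f γ).2)
        (stemOf Ω₂ f γ)).1 ∧
      IsRealQ (starPair (star (stemOf Ω₂ f γ).1, star (stemOf Ω₂ f γ).2)
        (stemOf Ω₂ f γ)).2) ∧
    IsStem Ω₁ (symmF Ω₁ Ω₂ f)
      (fun γ => starPair (star (stemOf Ω₂ f γ).1, star (stemOf Ω₂ f γ).2)
        (stemOf Ω₂ f γ)) :=
  ⟨fun _ _ => ⟨starPair_star_self _, isRealQ_starPair_star_self_fst _,
    isRealQ_starPair_star_self_snd _⟩, isStem_symmF hsp hf⟩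

/-- explicit form and reality of the symmetrized stem, and the fact that
it is a path-slice stem function of the symmetrization `f^s_{Ω₁}`. -/
theorem symm_stem {n : ℕ} (Ω₁ Ω₂ : Set (Fin n → ℍ[ℝ]))
    (h1 : Ω₁ ⊆ HSliceCone n) (h2 : Ω₂ ⊆ HSliceCone n)
    (hrpc : RealPathConnected Ω₁) (hsp : StemPreserving Ω₁ Ω₂)
    (f : (Fin n → ℍ[ℝ]) → ℍ[ℝ]) (hf : PathSlice Ω₂ f) :
    (∀ γ : PathC n, PathIn Ω₁ γ →
      starPair (star (stemOf Ω₂ f γ).1, star (stemOf Ω₂ f γ).2) (stemOf Ω₂ f γ)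
        = (star (stemOf Ω₂ f γ).1 * (stemOf Ω₂ f γ).1
            - star (stemOf Ω₂ f γ).2 * (stemOf Ω₂ f γ).2,
          star (stemOf Ω₂ f γ).2 * (stemOf Ω₂ f γ).1
            + star (star (stemOf Ω₂ f γ).2 * (stemOf Ω₂ f γ).1)) ∧
      IsRealQ (starPair (star (stemOf Ω₂ f γ).1, star (stemOf Ω₂ f γ).2)
        (stemOf Ω₂ f γ)).1 ∧
      IsRealQ (starPair (star (stemOf Ω₂ f γ).1, star (stemOf Ω₂ f γ).2)
        (stemOf Ω₂ f γ)).2) ∧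
    IsStem Ω₁ (symmF Ω₁ Ω₂ f)
      (fun γ => starPair (star (stemOf Ω₂ f γ).1, star (stemOf Ω₂ f γ).2)
        (stemOf Ω₂ f γ)) :=
  symm_stem_general Ω₁ Ω₂ hsp f hf

end
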